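/- arXiv:1701.08940 — 4 statements merged into one kernel-verified Lean document; each statement's English description precedes it below -/
import Mathlib

section
/- For every τ = u + iv in the upper half-plane and every (x,y) ∈ ℝ² with x ≠ 0, the function τ ↦ φ*_τ(x,y) satisfies ξ(φ*_·(x,y))(τ) = −φ_τ(x,y), i.e. 2iv·conj(∂/∂conj(τ) [e(((y²−x²)/2)τ)·sgn(x)·erfc(√(2πv)|x|)]) = −√(2v)·x·e((x²/2)τ − (y²/2)·conj(τ)). -/
open MeasureTheory Filter Set

noncomputable section

/-- `e(z) = exp(2πiz)` -/
def eC (z : ℂ) : ℂ := Complex.exp (2 * Real.pi * Complex.I * z)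

/-- The complementary error function `erfc(x) = (2/√π)∫_x^∞ e^{-r²} dr`. -/
def erfc (x : ℝ) : ℝ := (2 / Real.sqrt Real.pi) * ∫ r in Set.Ioi x, Real.exp (-(r ^ 2))

/-- `φ_τ(x,y) = √(2v)·x·e((x²/2)τ - (y²/2)·conj τ)` where `v = Im τ`. -/
def phi (τ : ℂ) (x y : ℝ) : ℂ :=
  (Real.sqrt (2 * τ.im) : ℂ) * (x : ℂ) *
    eC (((x : ℂ) ^ 2 / 2) * τ - ((y : ℂ) ^ 2 / 2) * (starRingEnd ℂ) τ)

/-- `φ*_τ(x,y) = e(((y²-x²)/2)τ)·sgn(x)·erfc(√(2πv)|x|)`. -/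
def phiStar (τ : ℂ) (x y : ℝ) : ℂ :=
  eC ((((y : ℂ) ^ 2 - (x : ℂ) ^ 2) / 2) * τ) * (Real.sign x : ℂ) *
    (erfc (Real.sqrt (2 * Real.pi * τ.im) * |x|) : ℂ)

/-- The Wirtinger derivative `∂f/∂conj(τ) = (1/2)(∂f/∂u + i·∂f/∂v)`. -/
def dbar (f : ℂ → ℂ) (τ : ℂ) : ℂ :=
  (1 / 2) * (fderiv ℝ f τ 1 + Complex.I * fderiv ℝ f τ Complex.I)

/-- The `ξ`-operator in weight one: `ξ(f)(τ) = 2iv·conj(∂f/∂conj(τ))`. -/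
def xi (f : ℂ → ℂ) (τ : ℂ) : ℂ :=
  2 * Complex.I * (τ.im : ℂ) * (starRingEnd ℂ) (dbar f τ)

/-! `φ*_τ` is a holomorphic function of `τ` times a real function of `v = Im τ`. The operator
`∂/∂τ̄` kills the holomorphic factor and acts on a function of `v` as `(i/2) d/dv`, so
`ξ(φ*)(τ) = v · conj(e(cτ)) · sgn(x) · d/dv erfc(√(2πv)|x|)` with `c = (y² - x²)/2`.
Since `erfc' = -(2/√π) e^{-t²}`, the derivative contributes `e^{-2πvx²}`, which combines with
`conj(e(cτ))` into `e((x²/2)τ - (y²/2)τ̄)`, and the remaining factor is `-√(2v) x`. -/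

open Real

lemma Real.sign_mul_abs (r : ℝ) : Real.sign r * |r| = r := by
  rcases lt_trichotomy r 0 with h | rfl | h
  · simp [Real.sign_of_neg h, abs_of_neg h]
  · simp
  · simp [Real.sign_of_pos h, abs_of_pos h]

theorem hasDerivAt_integral_Ioi {E : Type*} [NormedAddCommGroup E] [NormedSpace ℝ E]
    [CompleteSpace E] {f : ℝ → E} (hf : Integrable f) (hfc : Continuous f) (t : ℝ) :
    HasDerivAt (fun s => ∫ r in Ioi s, f r) (-f t) t := by
  have hsplit : (fun s => ∫ r in Ioi s, f r) =
      fun s => (∫ r in Ioi 0, f r) - ∫ r in (0 : ℝ)..s, f r := by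
    funext s
    rw [eq_sub_iff_add_eq', intervalIntegral.integral_interval_add_Ioi hf.integrableOn
      hf.integrableOn]
  rw [hsplit]
  exact (intervalIntegral.integral_hasDerivAt_right hf.intervalIntegrable
    hfc.aestronglyMeasurable.stronglyMeasurableAtFilter hfc.continuousAt).const_sub _

theorem hasDerivAt_erfc (t : ℝ) :
    HasDerivAt erfc (-(2 / √π * Real.exp (-t ^ 2))) t := by
  have hgauss : Integrable fun r : ℝ => Real.exp (-r ^ 2) := by
    simpa using integrable_exp_neg_mul_sq one_pos
  exact ((hasDerivAt_integral_Ioi hgauss (by fun_prop) t).const_mul (2 / √π)).congr_deriv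
    (mul_neg _ _)

theorem HasDerivAt.erfc {f : ℝ → ℝ} {f' t : ℝ} (hf : HasDerivAt f f' t) :
    HasDerivAt (fun s => erfc (f s)) (-(2 / √π * Real.exp (-f t ^ 2)) * f') t :=
  (hasDerivAt_erfc (f t)).comp t hf

theorem hasDerivAt_erfc_sqrt_mul_abs (x : ℝ) {v : ℝ} (hv : 0 < v) :
    HasDerivAt (fun t => erfc (√(2 * π * t) * |x|))
      (-(2 * |x| / √(2 * v) * Real.exp (-(2 * π * v * x ^ 2)))) v := by
  have h2πv : 0 < 2 * π * v := by positivity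
  convert ((((hasDerivAt_id' v).const_mul (2 * π)).sqrt h2πv.ne').mul_const |x|).erfc using 1
  have hsplit : √(2 * π * v) = √π * √(2 * v) := by
    rw [show 2 * π * v = π * (2 * v) by ring, Real.sqrt_mul Real.pi_pos.le]
  have hπ : √π ^ 2 = π := Real.sq_sqrt Real.pi_pos.le
  rw [mul_pow, Real.sq_sqrt h2πv.le, sq_abs, hsplit]
  field_simp
  rw [hπ]

theorem eC_add (a b : ℂ) : eC (a + b) = eC a * eC b := by
  rw [eC, eC, eC, mul_add, Complex.exp_add]

theorem conj_eC (z : ℂ) : starRingEnd ℂ (eC z) = eC (-starRingEnd ℂ z) := by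
  rw [eC, eC, ← Complex.exp_conj]
  congr 1
  simp only [map_mul, map_ofNat, Complex.conj_ofReal, Complex.conj_I]
  ring

theorem eC_I_mul_ofReal (t : ℝ) : eC (Complex.I * t) = Real.exp (-(2 * π * t)) := by
  rw [eC, Complex.ofReal_exp]
  congr 1
  push_cast
  linear_combination (2 * π * t : ℂ) * Complex.I_sq

theorem differentiable_eC_const_mul (c : ℂ) : Differentiable ℂ fun σ => eC (c * σ) := by
  unfold eC
  fun_prop

theorem dbar_mul_ofReal_comp_im {f : ℂ → ℂ} {g : ℝ → ℝ} {g' : ℝ} {τ : ℂ}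
    (hf : DifferentiableAt ℂ f τ) (hg : HasDerivAt g g' τ.im) :
    dbar (fun σ => f σ * (g σ.im : ℂ)) τ = Complex.I / 2 * f τ * g' := by
  have hgim : HasFDerivAt (fun σ : ℂ => (g σ.im : ℂ))
      (Complex.ofRealCLM.comp (g' • Complex.imCLM)) τ :=
    Complex.ofRealCLM.hasFDerivAt.comp τ (hg.comp_hasFDerivAt τ Complex.imCLM.hasFDerivAt)
  rw [dbar, ((hf.hasDerivAt.hasFDerivAt.restrictScalars ℝ).fun_mul hgim).fderiv]
  simp only [add_apply, smul_apply, ContinuousLinearMap.comp_apply,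
    ContinuousLinearMap.coe_restrictScalars', ContinuousLinearMap.toSpanSingleton_apply,
    Complex.ofRealCLM_apply, Complex.imCLM_apply, Complex.one_im, Complex.I_im, smul_eq_mul]
  push_cast
  -- Cauchy–Riemann: the holomorphic factor contributes `f' · 1 + i · (f' · i) = 0`.
  linear_combination (deriv f τ * g τ.im / 2) * Complex.I_sq

theorem xi_mul_ofReal_comp_im {f : ℂ → ℂ} {g : ℝ → ℝ} {g' : ℝ} {τ : ℂ}
    (hf : DifferentiableAt ℂ f τ) (hg : HasDerivAt g g' τ.im) :
    xi (fun σ => f σ * (g σ.im : ℂ)) τ = τ.im * starRingEnd ℂ (f τ) * g' := by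
  rw [xi, dbar_mul_ofReal_comp_im hf hg]
  simp only [map_mul, map_div₀, Complex.conj_I, Complex.conj_ofReal, map_ofNat]
  linear_combination (-(τ.im : ℂ) * starRingEnd ℂ (f τ) * g') * Complex.I_sq

theorem eC_half_sq_mul_sub_half_sq_mul_conj (x y : ℝ) (τ : ℂ) :
    eC ((x : ℂ) ^ 2 / 2 * τ - (y : ℂ) ^ 2 / 2 * starRingEnd ℂ τ) =
      starRingEnd ℂ (eC (((y : ℂ) ^ 2 - (x : ℂ) ^ 2) / 2 * τ)) *
        Real.exp (-(2 * π * τ.im * x ^ 2)) := by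
  have hconj : starRingEnd ℂ τ = τ - (2 * τ.im : ℝ) * Complex.I := by
    rw [← Complex.sub_conj]
    ring
  rw [conj_eC, show 2 * π * τ.im * x ^ 2 = 2 * π * (τ.im * x ^ 2) by ring, ← eC_I_mul_ofReal,
    ← eC_add]
  congr 1
  simp only [map_mul, map_div₀, map_sub, map_pow, Complex.conj_ofReal, map_ofNat]
  rw [hconj]
  push_cast
  ring

theorem stmt0_general (τ : ℂ) (hτ : 0 < τ.im) (x y : ℝ) :
    xi (fun σ => phiStar σ x y) τ = - phi τ x y := by
  set c : ℂ := ((y : ℂ) ^ 2 - (x : ℂ) ^ 2) / 2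
  have hxi : xi (fun σ => phiStar σ x y) τ = _ :=
    xi_mul_ofReal_comp_im (g := fun t => erfc (√(2 * π * t) * |x|))
      ((differentiable_eC_const_mul c τ).mul_const (Real.sign x : ℂ))
      (hasDerivAt_erfc_sqrt_mul_abs x hτ)
  have hscalar : ((τ.im * Real.sign x * (2 * |x| / √(2 * τ.im)) : ℝ) : ℂ) =
      (√(2 * τ.im) * x : ℝ) := by
    rw [show τ.im * Real.sign x * (2 * |x| / √(2 * τ.im)) =
      2 * τ.im / √(2 * τ.im) * (Real.sign x * |x|) by ring, Real.div_sqrt, Real.sign_mul_abs]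
  rw [hxi, phi, eC_half_sq_mul_sub_half_sq_mul_conj]
  generalize Real.exp (-(2 * π * τ.im * x ^ 2)) = E
  simp only [map_mul, Complex.conj_ofReal]
  push_cast at hscalar ⊢
  linear_combination (-starRingEnd ℂ (eC (c * τ)) * E) * hscalar

/-- for `τ` in the upper half-plane and `x ≠ 0`,
`ξ(φ*_·(x,y))(τ) = -φ_τ(x,y)`. -/
theorem stmt0 (τ : ℂ) (hτ : 0 < τ.im) (x y : ℝ) (hx : x ≠ 0) :
    xi (fun σ => phiStar σ x y) τ = - phi τ x y :=
  stmt0_general τ hτ x y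

end
end

section
/- For every real y > 0 one has e^{−2πy} = √y · ∫_0^∞ e^{−πy(t² + t^{−2})}·(t + t^{−1}) · dt/t, the integral converging absolutely. -/
/-!
Substitute `u = t - t⁻¹`, an increasing bijection of `(0, ∞)` onto `ℝ` with
`du = (1 + t⁻²) dt = (t + t⁻¹) dt/t` and `t² + t⁻² = u² + 2`. The integral becomes the Gaussian
integral `∫ e^{-πy(u² + 2)} du = e^{-2πy} / √y`.
-/

open MeasureTheory Set Real

lemma hasDerivAt_sub_inv {t : ℝ} (ht : t ≠ 0) :
    HasDerivAt (fun t : ℝ => t - t⁻¹) (1 + (t ^ 2)⁻¹) t :=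
  ((hasDerivAt_id' t).sub (hasDerivAt_inv ht)).congr_deriv (sub_neg_eq_add _ _)

lemma hasDerivWithinAt_sub_inv_Ioi :
    ∀ t ∈ Ioi (0 : ℝ), HasDerivWithinAt (fun t : ℝ => t - t⁻¹) (1 + (t ^ 2)⁻¹) (Ioi 0) t :=
  fun _ ht => (hasDerivAt_sub_inv (ne_of_gt ht)).hasDerivWithinAt

lemma strictMonoOn_sub_inv : StrictMonoOn (fun t : ℝ => t - t⁻¹) (Ioi 0) := by
  intro a ha b hb hab
  have : b⁻¹ < a⁻¹ := inv_strictAntiOn ha hb hab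
  simp only
  linarith

lemma image_sub_inv_Ioi : (fun t : ℝ => t - t⁻¹) '' Ioi 0 = univ := by
  refine eq_univ_of_forall fun u => ?_
  -- the positive root of `t² - u t - 1 = 0`
  set s := √(u ^ 2 + 4)
  have hs_sq : s ^ 2 = u ^ 2 + 4 := sq_sqrt (by positivity)
  have hs : |u| < s := by
    rw [← sqrt_sq_eq_abs]
    exact sqrt_lt_sqrt (sq_nonneg u) (by linarith)
  have hpos : 0 < u + s := by linarith [neg_abs_le u]
  refine ⟨(u + s) / 2, half_pos hpos, ?_⟩
  field_simp
  nlinarith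

section ChangeOfVariables

variable {E : Type*} [NormedAddCommGroup E] [NormedSpace ℝ E]

theorem integrableOn_Ioi_comp_sub_inv_iff (g : ℝ → E) :
    IntegrableOn (fun t => (1 + (t ^ 2)⁻¹) • g (t - t⁻¹)) (Ioi 0) ↔ Integrable g := by
  rw [← integrableOn_univ, ← image_sub_inv_Ioi,
    integrableOn_image_iff_integrableOn_deriv_smul_of_monotoneOn measurableSet_Ioi
      hasDerivWithinAt_sub_inv_Ioi strictMonoOn_sub_inv.monotoneOn]

theorem integral_Ioi_comp_sub_inv (g : ℝ → E) :
    ∫ t in Ioi 0, (1 + (t ^ 2)⁻¹) • g (t - t⁻¹) = ∫ u, g u := by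
  have := integral_image_eq_integral_deriv_smul_of_monotoneOn measurableSet_Ioi
    hasDerivWithinAt_sub_inv_Ioi strictMonoOn_sub_inv.monotoneOn g
  rw [image_sub_inv_Ioi, setIntegral_univ] at this
  exact this.symm

end ChangeOfVariables

lemma exp_neg_mul_sq_add_eq (b c u : ℝ) :
    exp (-(b * (u ^ 2 + c))) = exp (-(b * c)) * exp (-b * u ^ 2) := by
  rw [← exp_add]
  ring_nf

lemma integrable_exp_neg_mul_sq_add {b : ℝ} (hb : 0 < b) (c : ℝ) :
    Integrable fun u : ℝ => exp (-(b * (u ^ 2 + c))) := by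
  simpa only [exp_neg_mul_sq_add_eq] using (integrable_exp_neg_mul_sq hb).const_mul _

lemma integral_exp_neg_mul_sq_add (b c : ℝ) :
    ∫ u : ℝ, exp (-(b * (u ^ 2 + c))) = exp (-(b * c)) * √(π / b) := by
  simp only [exp_neg_mul_sq_add_eq, integral_const_mul, integral_gaussian]

lemma integrand_eq_comp_sub_inv (b : ℝ) {t : ℝ} (ht : t ≠ 0) :
    exp (-(b * (t ^ 2 + t⁻¹ ^ 2))) * (t + t⁻¹) / t
      = (1 + (t ^ 2)⁻¹) • exp (-(b * ((t - t⁻¹) ^ 2 + 2))) := by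
  have hsq : (t - t⁻¹) ^ 2 + 2 = t ^ 2 + t⁻¹ ^ 2 := by
    field_simp
    ring
  rw [hsq, smul_eq_mul]
  field_simp

/-- `e^{-2πy} = √y·∫_0^∞ e^{-πy(t²+t⁻²)}·(t+t⁻¹) dt/t` for `y > 0`,
the integral converging absolutely. -/
theorem stmt7 (y : ℝ) (hy : 0 < y) :
    IntegrableOn (fun t : ℝ =>
      Real.exp (-(Real.pi * y * (t ^ 2 + (t⁻¹) ^ 2))) * (t + t⁻¹) / t) (Set.Ioi 0) ∧
    Real.exp (-(2 * Real.pi * y)) =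
      Real.sqrt y * ∫ t in Set.Ioi (0 : ℝ),
        Real.exp (-(Real.pi * y * (t ^ 2 + (t⁻¹) ^ 2))) * (t + t⁻¹) / t := by
  have hπy : 0 < π * y := mul_pos pi_pos hy
  have hcongr : EqOn (fun t : ℝ => exp (-(π * y * (t ^ 2 + t⁻¹ ^ 2))) * (t + t⁻¹) / t)
      (fun t => (1 + (t ^ 2)⁻¹) • exp (-(π * y * ((t - t⁻¹) ^ 2 + 2)))) (Ioi 0) :=
    fun t ht => integrand_eq_comp_sub_inv _ (ne_of_gt ht)
  refine ⟨?_, ?_⟩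
  · refine IntegrableOn.congr_fun ?_ hcongr.symm measurableSet_Ioi
    exact (integrableOn_Ioi_comp_sub_inv_iff _).2 (integrable_exp_neg_mul_sq_add hπy 2)
  · rw [setIntegral_congr_fun measurableSet_Ioi hcongr,
      integral_Ioi_comp_sub_inv fun u => exp (-(π * y * (u ^ 2 + 2))), integral_exp_neg_mul_sq_add, show π / (π * y) = y⁻¹ by field_simp, sqrt_inv]
    have : √y ≠ 0 := (sqrt_pos.2 hy).ne'
    field_simp
end

section
/- Let N be a positive integer, τ ∈ H, and let x₁, x₂ be real numbers with x₁x₂ > 0. Then ∫_0^∞ φ_τ(ι_t(x₁,x₂)) dt/t = sgn(x₁)·e((x₁x₂/N)·τ), the integral converging absolutely. Equivalently, with n := x₁x₂/N: √(v/N)·∫_0^∞ (t^{−1}x₁ + t x₂)·e( n·u + iv·(t^{−2}x₁² + t²x₂²)/(2N) ) dt/t = sgn(x₁)·e(nτ). -/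
/-!
Write `n = x₁x₂/N` and `v = Im τ`. Since `ι_t` turns the exponent of `φ_τ` into
`n·u + i·v·(x₁²/t² + x₂²t²)/(2N)`, completing the square `x₁²/t² + x₂²t² = (x₂t - x₁/t)² + 2x₁x₂`
gives `φ_τ(ι_t(x₁,x₂))/t = √(v/N)·e(nτ)·(x₁/t² + x₂)·exp(-π(v/N)(x₂t - x₁/t)²)`.
The Cauchy–Schlömilch substitution `s = x₂t - x₁/t`, with `ds = (x₁/t² + x₂) dt`, maps `(0,∞)`
bijectively onto `ℝ` when `x₁, x₂ > 0`, and onto `ℝ` reversed when `x₁, x₂ < 0`. The integral is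
therefore `sgn(x₁)·√(v/N)·e(nτ)` times the Gaussian integral `∫ exp(-π(v/N)s²) ds = √(N/v)`.
-/

open MeasureTheory Filter Set

noncomputable section

/-- The isometry `ι_t(x₁,x₂) = ((t⁻¹x₁+tx₂)/√(2N), (t⁻¹x₁-tx₂)/√(2N))`. -/
def iota (N : ℕ) (t x₁ x₂ : ℝ) : ℝ × ℝ :=
  ((t⁻¹ * x₁ + t * x₂) / Real.sqrt (2 * N), (t⁻¹ * x₁ - t * x₂) / Real.sqrt (2 * N))

section CauchySchlomilch

variable {E : Type*} [NormedAddCommGroup E] [NormedSpace ℝ E] {b c : ℝ}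

lemma hasDerivAt_mul_sub_div (b c : ℝ) {t : ℝ} (ht : t ≠ 0) :
    HasDerivAt (fun t => c * t - b / t) (b / t ^ 2 + c) t := by
  have h : HasDerivAt (fun t => c * t - b * t⁻¹) (c * 1 - b * -(t ^ 2)⁻¹) t :=
    ((hasDerivAt_id' t).const_mul c).sub ((hasDerivAt_inv ht).const_mul b)
  simp only [div_eq_mul_inv]
  convert h using 1
  ring

lemma injOn_mul_sub_div (hb : 0 < b) (hc : 0 < c) :
    InjOn (fun t => c * t - b / t) (Ioi 0) := by
  intro s (hs : 0 < s) t (ht : 0 < t) h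
  have key : (s - t) * (c * (s * t) + b) = 0 := by
    field_simp at h
    linear_combination h
  have : 0 < c * (s * t) + b := by positivity
  linarith [(mul_eq_zero.mp key).resolve_right this.ne']

lemma image_mul_sub_div_Ioi (hb : 0 < b) (hc : 0 < c) :
    (fun t => c * t - b / t) '' Ioi 0 = univ := by
  refine eq_univ_of_forall fun y => ?_
  -- the positive root of `c t² - y t - b = 0`
  set r := Real.sqrt (y ^ 2 + 4 * (b * c))
  have hr : r ^ 2 = y ^ 2 + 4 * (b * c) := Real.sq_sqrt (by positivity)
  have hyr : 0 < y + r := by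
    have : |y| < r := (Real.lt_sqrt (abs_nonneg y)).2 (by rw [sq_abs]; nlinarith)
    linarith [neg_abs_le y]
  refine ⟨(y + r) / (2 * c), div_pos hyr (by positivity), ?_⟩
  field_simp
  linear_combination hr

theorem integrableOn_Ioi_comp_mul_sub_div_iff (hb : 0 < b) (hc : 0 < c) (g : ℝ → E) :
    IntegrableOn (fun t => (b / t ^ 2 + c) • g (c * t - b / t)) (Ioi 0) ↔ Integrable g := by
  have hderiv : ∀ t ∈ Ioi (0 : ℝ), HasDerivWithinAt (fun t => c * t - b / t) (b / t ^ 2 + c)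
      (Ioi 0) t := fun t ht => (hasDerivAt_mul_sub_div b c (ne_of_gt ht)).hasDerivWithinAt
  rw [← integrableOn_univ, ← image_mul_sub_div_Ioi hb hc,
    integrableOn_image_iff_integrableOn_abs_deriv_smul measurableSet_Ioi hderiv
      (injOn_mul_sub_div hb hc)]
  refine integrableOn_congr_fun (fun t (ht : 0 < t) => ?_) measurableSet_Ioi
  rw [abs_of_pos (by positivity)]

theorem integral_Ioi_comp_mul_sub_div (hb : 0 < b) (hc : 0 < c) (g : ℝ → E) :
    ∫ t in Ioi 0, (b / t ^ 2 + c) • g (c * t - b / t) = ∫ s, g s := by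
  have hderiv : ∀ t ∈ Ioi (0 : ℝ), HasDerivWithinAt (fun t => c * t - b / t) (b / t ^ 2 + c)
      (Ioi 0) t := fun t ht => (hasDerivAt_mul_sub_div b c (ne_of_gt ht)).hasDerivWithinAt
  have h := integral_image_eq_integral_abs_deriv_smul measurableSet_Ioi hderiv
    (injOn_mul_sub_div hb hc) g
  rw [image_mul_sub_div_Ioi hb hc, setIntegral_univ] at h
  rw [h]
  refine setIntegral_congr_fun measurableSet_Ioi fun t (ht : 0 < t) => ?_
  rw [abs_of_pos (by positivity)]

lemma smul_comp_mul_sub_div_eq_neg (g : ℝ → E) :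
    (fun t => (b / t ^ 2 + c) • g (c * t - b / t)) =
      -fun t => (-b / t ^ 2 + -c) • g (-(-c * t - -b / t)) := by
  funext t
  simp only [Pi.neg_apply, ← neg_smul]
  congr 2 <;> ring

theorem MeasureTheory.Integrable.integrableOn_Ioi_comp_mul_sub_div {g : ℝ → E} (hg : Integrable g)
    (hbc : 0 < b * c) :
    IntegrableOn (fun t => (b / t ^ 2 + c) • g (c * t - b / t)) (Ioi 0) := by
  rcases lt_or_gt_of_ne (left_ne_zero_of_mul hbc.ne') with hb | hb
  · have hc : c < 0 := neg_of_mul_pos_right hbc hb.le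
    rw [smul_comp_mul_sub_div_eq_neg g]
    exact ((integrableOn_Ioi_comp_mul_sub_div_iff (neg_pos.2 hb) (neg_pos.2 hc) _).2
      hg.comp_neg).neg
  · exact (integrableOn_Ioi_comp_mul_sub_div_iff hb (pos_of_mul_pos_right hbc hb.le) g).2 hg

theorem integral_Ioi_comp_mul_sub_div_of_mul_pos (g : ℝ → E) (hbc : 0 < b * c) :
    ∫ t in Ioi 0, (b / t ^ 2 + c) • g (c * t - b / t) = Real.sign b • ∫ s, g s := by
  rcases lt_or_gt_of_ne (left_ne_zero_of_mul hbc.ne') with hb | hb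
  · have hc : c < 0 := neg_of_mul_pos_right hbc hb.le
    rw [smul_comp_mul_sub_div_eq_neg g, integral_neg', ← integral_neg_eq_self g,
      ← integral_Ioi_comp_mul_sub_div (neg_pos.2 hb) (neg_pos.2 hc) (fun s => g (-s)),
      Real.sign_of_neg hb, neg_one_smul]
  · rw [integral_Ioi_comp_mul_sub_div hb (pos_of_mul_pos_right hbc hb.le), Real.sign_of_pos hb,
      one_smul]

end CauchySchlomilch

section

open Complex

variable {N : ℕ} {t : ℝ}

lemma eC_add_I_mul (z : ℂ) (y : ℝ) :
    eC (z + I * y) = eC z * (Real.exp (-(2 * Real.pi * y)) : ℂ) := by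
  rw [eC, eC, Complex.ofReal_exp, ← Complex.exp_add]
  congr 1
  push_cast
  linear_combination (2 * Real.pi * y : ℂ) * I_mul_I

lemma phi_eq (τ : ℂ) (x y : ℝ) :
    phi τ x y = (Real.sqrt (2 * τ.im) : ℂ) * x *
      eC (((x ^ 2 - y ^ 2) / 2 : ℝ) * (τ.re : ℂ) + I * τ.im * (((x ^ 2 + y ^ 2) / 2 : ℝ) : ℂ)) := by
  have hconj : (starRingEnd ℂ) τ = τ.re - τ.im * I := by apply Complex.ext <;> simp
  rw [phi, hconj]
  congr 2
  nth_rewrite 1 [← re_add_im τ]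
  push_cast
  ring

lemma iota_fst_sq_sub_snd_sq (hN : N ≠ 0) (ht : t ≠ 0) (x₁ x₂ : ℝ) :
    (iota N t x₁ x₂).1 ^ 2 - (iota N t x₁ x₂).2 ^ 2 = 2 * (x₁ * x₂ / N) := by
  have hS : Real.sqrt (2 * N) ^ 2 = 2 * N := Real.sq_sqrt (by positivity)
  simp only [iota, div_pow, ← sub_div, hS]
  field_simp
  ring

lemma iota_fst_sq_add_snd_sq (x₁ x₂ : ℝ) :
    (iota N t x₁ x₂).1 ^ 2 + (iota N t x₁ x₂).2 ^ 2 = (t⁻¹ ^ 2 * x₁ ^ 2 + t ^ 2 * x₂ ^ 2) / N := by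
  have hS : Real.sqrt (2 * N) ^ 2 = 2 * N := Real.sq_sqrt (by positivity)
  simp only [iota, div_pow, ← add_div, hS]
  rw [mul_comm 2 (N : ℝ), ← div_div]
  ring

lemma sqrt_two_mul_mul_iota_fst (v x₁ x₂ : ℝ) :
    Real.sqrt (2 * v) * (iota N t x₁ x₂).1 = Real.sqrt (v / N) * (t⁻¹ * x₁ + t * x₂) := by
  rw [iota, ← mul_div_mul_left v (N : ℝ) two_ne_zero, Real.sqrt_div' _ (by positivity)]
  ring

lemma phi_iota (hN : N ≠ 0) (ht : t ≠ 0) (τ : ℂ) (x₁ x₂ : ℝ) :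
    phi τ (iota N t x₁ x₂).1 (iota N t x₁ x₂).2 =
      (Real.sqrt (τ.im / N) : ℂ) * ((t⁻¹ * x₁ + t * x₂ : ℝ) : ℂ) *
        eC (((x₁ * x₂ / N : ℝ) : ℂ) * (τ.re : ℂ) +
          I * (τ.im : ℂ) * (((t⁻¹ ^ 2 * x₁ ^ 2 + t ^ 2 * x₂ ^ 2) / (2 * N) : ℝ) : ℂ)) := by
  rw [phi_eq, iota_fst_sq_sub_snd_sq hN ht, iota_fst_sq_add_snd_sq, ← Complex.ofReal_mul,
    sqrt_two_mul_mul_iota_fst, mul_div_assoc, div_div, mul_comm (N : ℝ) 2]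
  push_cast
  congr 2
  ring

lemma mul_eC_div_eq_eC_mul_gaussian (hN : N ≠ 0) (ht : t ≠ 0) (τ : ℂ) (x₁ x₂ : ℝ) :
    ((t⁻¹ * x₁ + t * x₂ : ℝ) : ℂ) *
        eC (((x₁ * x₂ / N : ℝ) : ℂ) * (τ.re : ℂ) +
          I * (τ.im : ℂ) * (((t⁻¹ ^ 2 * x₁ ^ 2 + t ^ 2 * x₂ ^ 2) / (2 * N) : ℝ) : ℂ)) / t =
      eC (((x₁ * x₂ / N : ℝ) : ℂ) * τ) * ((x₁ / t ^ 2 + x₂) •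
        ((Real.exp (-(Real.pi * (τ.im / N)) * (x₂ * t - x₁ / t) ^ 2) : ℝ) : ℂ)) := by
  have hN' : (N : ℝ) ≠ 0 := Nat.cast_ne_zero.2 hN
  rw [show (x₁ * x₂ / N : ℝ) * τ = (x₁ * x₂ / N : ℝ) * (τ.re : ℂ) +
      I * ((x₁ * x₂ / N * τ.im : ℝ) : ℂ) by nth_rewrite 1 [← re_add_im τ]; push_cast; ring,
    ← ofReal_mul, mul_assoc I, ← ofReal_mul, eC_add_I_mul, eC_add_I_mul]
  -- completing the square: `x₁²/t² + x₂²t² = (x₂t - x₁/t)² + 2x₁x₂`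
  rw [show Real.exp (-(2 * Real.pi * (τ.im * ((t⁻¹ ^ 2 * x₁ ^ 2 + t ^ 2 * x₂ ^ 2) / (2 * N))))) =
      Real.exp (-(2 * Real.pi * (x₁ * x₂ / N * τ.im))) *
        Real.exp (-(Real.pi * (τ.im / N)) * (x₂ * t - x₁ / t) ^ 2) by
    rw [← Real.exp_add]; congr 1; field_simp; ring]
  have htC : (t : ℂ) ≠ 0 := ofReal_ne_zero.2 ht
  rw [real_smul]
  push_cast
  field_simp

end

open Real in
lemma integral_ofReal_exp_neg_pi_mul_sq (a : ℝ) :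
    ∫ s : ℝ, ((Real.exp (-(π * a) * s ^ 2) : ℝ) : ℂ) = ((Real.sqrt a)⁻¹ : ℝ) := by
  rw [integral_complex_ofReal, integral_gaussian, ← Real.sqrt_inv]
  congr 2
  field_simp

/-- for `x₁x₂ > 0`, `∫_0^∞ φ_τ(ι_t(x₁,x₂)) dt/t = sgn(x₁)·e((x₁x₂/N)τ)`,
the integral converging absolutely; equivalently, with `n = x₁x₂/N`,
`√(v/N)·∫_0^∞ (t⁻¹x₁+tx₂)·e(nu + iv(t⁻²x₁²+t²x₂²)/(2N)) dt/t = sgn(x₁)·e(nτ)`. -/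
theorem stmt8 (N : ℕ) (hN : 0 < N) (τ : ℂ) (hτ : 0 < τ.im) (x₁ x₂ : ℝ)
    (hx : 0 < x₁ * x₂) :
    IntegrableOn (fun t : ℝ =>
      phi τ (iota N t x₁ x₂).1 (iota N t x₁ x₂).2 / (t : ℂ)) (Set.Ioi 0) ∧
    (∫ t in Set.Ioi (0 : ℝ), phi τ (iota N t x₁ x₂).1 (iota N t x₁ x₂).2 / (t : ℂ)) =
      (Real.sign x₁ : ℂ) * eC (((x₁ * x₂ / N : ℝ) : ℂ) * τ) ∧
    (Real.sqrt (τ.im / N) : ℂ) * ∫ t in Set.Ioi (0 : ℝ),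
        ((t⁻¹ * x₁ + t * x₂ : ℝ) : ℂ) *
          eC (((x₁ * x₂ / N : ℝ) : ℂ) * (τ.re : ℂ) +
            Complex.I * (τ.im : ℂ) *
              (((t⁻¹ ^ 2 * x₁ ^ 2 + t ^ 2 * x₂ ^ 2) / (2 * N) : ℝ) : ℂ)) / (t : ℂ) =
      (Real.sign x₁ : ℂ) * eC (((x₁ * x₂ / N : ℝ) : ℂ) * τ) := by
  set g : ℝ → ℂ := fun s => ((Real.exp (-(Real.pi * (τ.im / N)) * s ^ 2) : ℝ) : ℂ)
  have hg : Integrable g := (integrable_exp_neg_mul_sq (by positivity)).ofReal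
  have hphi : ∀ t ∈ Ioi (0 : ℝ), phi τ (iota N t x₁ x₂).1 (iota N t x₁ x₂).2 / t =
      (Real.sqrt (τ.im / N) : ℂ) * (((t⁻¹ * x₁ + t * x₂ : ℝ) : ℂ) *
        eC (((x₁ * x₂ / N : ℝ) : ℂ) * (τ.re : ℂ) + Complex.I * (τ.im : ℂ) *
          (((t⁻¹ ^ 2 * x₁ ^ 2 + t ^ 2 * x₂ ^ 2) / (2 * N) : ℝ) : ℂ)) / t) :=
    fun t ht => by rw [phi_iota hN.ne' (ne_of_gt ht), mul_assoc, mul_div_assoc]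
  have hphi' : ∀ t ∈ Ioi (0 : ℝ), phi τ (iota N t x₁ x₂).1 (iota N t x₁ x₂).2 / t =
      (Real.sqrt (τ.im / N) * eC (((x₁ * x₂ / N : ℝ) : ℂ) * τ)) *
        ((x₁ / t ^ 2 + x₂) • g (x₂ * t - x₁ / t)) := fun t ht => by
    rw [hphi t ht, mul_eC_div_eq_eC_mul_gaussian hN.ne' (ne_of_gt ht), mul_assoc]
  have hval : ∫ t in Ioi (0 : ℝ), phi τ (iota N t x₁ x₂).1 (iota N t x₁ x₂).2 / t =
      (Real.sign x₁ : ℂ) * eC (((x₁ * x₂ / N : ℝ) : ℂ) * τ) := by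
    have hsqrt : (Real.sqrt (τ.im / N) : ℂ) ≠ 0 := by norm_cast; positivity
    rw [setIntegral_congr_fun measurableSet_Ioi hphi', integral_const_mul,
      integral_Ioi_comp_mul_sub_div_of_mul_pos g hx, integral_ofReal_exp_neg_pi_mul_sq,
      Complex.real_smul]
    push_cast
    field_simp
  refine ⟨IntegrableOn.congr_fun ((hg.integrableOn_Ioi_comp_mul_sub_div hx).const_mul _)
    (fun t ht => (hphi' t ht).symm) measurableSet_Ioi, hval, ?_⟩
  rw [← integral_const_mul, ← setIntegral_congr_fun measurableSet_Ioi hphi, hval]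

end
end

section
/- Let N be a positive integer, τ ∈ H, and let x₁, x₂ be real numbers with x₁x₂ < 0; set n := −x₁x₂/N > 0. For real s > 0 define I⁺(s) := ∫_1^∞ φ⁺_τ(ι_t(x₁,x₂))·t^{−s} dt/t + ∫_0^1 φ⁺_τ(ι_t(x₁,x₂))·t^{s} dt/t. Then each integral converges absolutely for s > 0, and lim_{s→0⁺} I⁺(s) = sgn(x₁)·log|x₁/x₂|·e(nτ). -/
open MeasureTheory Filter Set

noncomputable section

/-- `φ⁺_τ(x,y) = e(((y²-x²)/2)τ)·sgn(x)·1_{y²>x²}`. -/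
def phiPlus (τ : ℂ) (x y : ℝ) : ℂ :=
  eC ((((y : ℂ) ^ 2 - (x : ℂ) ^ 2) / 2) * τ) * (Real.sign x : ℂ) *
    (if x ^ 2 < y ^ 2 then 1 else 0)

/-!
Along the curve `t ↦ ι_t(x₁, x₂)` the quadratic form `y² - x²` is constant, equal to `2n`, so
`φ⁺_τ(ι_t(x₁, x₂)) = sgn(x₁) e(nτ) sgn(T - t)`, where `T = √|x₁/x₂|` is the point at which the
first coordinate of `ι_t` changes sign. The regularized integral of `sgn(T - t)` is elementary,
`∫₁^∞ sgn(T - t) t^(-s) dt/t + ∫₀¹ sgn(T - t) t^s dt/t = 2 (min(T,1)^s - max(T,1)^(-s)) / s`,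
and tends to `2 log (min(T,1) max(T,1)) = 2 log T = log |x₁/x₂|` as `s → 0⁺`.
-/

theorem Real.sign_mul (a b : ℝ) : Real.sign (a * b) = Real.sign a * Real.sign b := by
  rcases lt_trichotomy a 0 with ha | ha | ha <;> rcases lt_trichotomy b 0 with hb | hb | hb <;>
    simp [Real.sign_of_neg, Real.sign_of_pos, ha, hb, mul_pos_of_neg_of_neg, mul_neg_of_neg_of_pos,
      mul_neg_of_pos_of_neg]

theorem Real.abs_sign_le_one (r : ℝ) : |Real.sign r| ≤ 1 := by
  rcases Real.sign_apply_eq r with h | h | h <;> simp [h]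

theorem Real.measurable_sign : Measurable Real.sign := by
  unfold Real.sign
  exact Measurable.ite measurableSet_Iio measurable_const
    (Measurable.ite measurableSet_Ioi measurable_const measurable_const)

theorem Real.sign_max_sub_of_lt {a t : ℝ} (b : ℝ) (h : a < t) :
    Real.sign (max b a - t) = Real.sign (b - t) := by
  rcases le_total b a with hba | hab
  · rw [max_eq_right hba, Real.sign_of_neg (by linarith), Real.sign_of_neg (by linarith)]
  · rw [max_eq_left hab]

theorem Real.sign_min_sub_of_gt {a t : ℝ} (b : ℝ) (h : t < a) :
    Real.sign (min b a - t) = Real.sign (b - t) := by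
  rcases le_total b a with hba | hab
  · rw [min_eq_left hba]
  · rw [min_eq_right hab, Real.sign_of_pos (by linarith), Real.sign_of_pos (by linarith)]

theorem MeasureTheory.IntegrableOn.sign_sub_mul {f : ℝ → ℝ} {S : Set ℝ} (b : ℝ)
    (hf : IntegrableOn f S) : IntegrableOn (fun t => Real.sign (b - t) * f t) S :=
  hf.bdd_mul (Real.measurable_sign.comp (measurable_const.sub measurable_id)).aestronglyMeasurable
    (ae_of_all _ fun t => by simpa using Real.abs_sign_le_one (b - t))

section

variable {s a b T : ℝ}

theorem integral_rpow_sub_one (hs : 0 < s) :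
    ∫ t in a..b, t ^ (s - 1) = (b ^ s - a ^ s) / s := by
  rw [integral_rpow (Or.inl (by linarith)), sub_add_cancel]

theorem integral_Ioi_sign_sub_mul_rpow (hs : 0 < s) (ha : 0 < a) (hab : a ≤ b) :
    ∫ t in Ioi a, Real.sign (b - t) * t ^ (-s - 1) = (a ^ (-s) - 2 * b ^ (-s)) / s := by
  have hint := (integrableOn_Ioi_rpow_of_lt (by linarith : -s - 1 < -1) ha).sign_sub_mul b
  have hbelow :
      ∫ t in Ioc a b, Real.sign (b - t) * t ^ (-s - 1) = (a ^ (-s) - b ^ (-s)) / s := by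
    rw [integral_Ioc_eq_integral_Ioo, setIntegral_congr_fun measurableSet_Ioo
        (g := fun t => t ^ (-s - 1)) fun t ht => by simp [Real.sign_of_pos (sub_pos.2 ht.2)],
      ← integral_Ioc_eq_integral_Ioo, ← intervalIntegral.integral_of_le hab,
      integral_rpow (Or.inr ⟨by linarith, notMem_uIcc_of_lt ha (ha.trans_le hab)⟩),
      sub_add_cancel, div_neg, ← neg_div, neg_sub]
  have habove : ∫ t in Ioi b, Real.sign (b - t) * t ^ (-s - 1) = -(b ^ (-s) / s) := by
    rw [setIntegral_congr_fun measurableSet_Ioi (g := fun t => -t ^ (-s - 1))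
        fun t ht => by simp [Real.sign_of_neg (sub_neg.2 ht)],
      integral_neg, integral_Ioi_rpow_of_lt (by linarith) (ha.trans_le hab), sub_add_cancel,
      div_neg, neg_neg, neg_div]
  rw [← Ioc_union_Ioi_eq_Ioi hab, setIntegral_union (Ioc_disjoint_Ioi le_rfl) measurableSet_Ioi
    (hint.mono_set Ioc_subset_Ioi_self) (hint.mono_set (Ioi_subset_Ioi hab)), hbelow, habove]
  ring

theorem integral_Ioo_zero_sign_sub_mul_rpow (hs : 0 < s) (hb : 0 ≤ b) (hba : b ≤ a) :
    ∫ t in Ioo 0 a, Real.sign (b - t) * t ^ (s - 1) = (2 * b ^ s - a ^ s) / s := by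
  have hint : IntegrableOn (fun t => Real.sign (b - t) * t ^ (s - 1)) (Ioc 0 a) :=
    ((intervalIntegrable_iff_integrableOn_Ioc_of_le (hb.trans hba)).1
      (intervalIntegral.intervalIntegrable_rpow' (by linarith))).sign_sub_mul b
  have hbelow : ∫ t in Ioc 0 b, Real.sign (b - t) * t ^ (s - 1) = b ^ s / s := by
    rw [integral_Ioc_eq_integral_Ioo, setIntegral_congr_fun measurableSet_Ioo
        (g := fun t => t ^ (s - 1)) fun t ht => by simp [Real.sign_of_pos (sub_pos.2 ht.2)],
      ← integral_Ioc_eq_integral_Ioo, ← intervalIntegral.integral_of_le hb,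
      integral_rpow_sub_one hs, Real.zero_rpow hs.ne', sub_zero]
  have habove : ∫ t in Ioc b a, Real.sign (b - t) * t ^ (s - 1) = -((a ^ s - b ^ s) / s) := by
    rw [setIntegral_congr_fun measurableSet_Ioc (g := fun t => -t ^ (s - 1))
        fun t ht => by simp [Real.sign_of_neg (sub_neg.2 ht.1)],
      integral_neg, ← intervalIntegral.integral_of_le hba, integral_rpow_sub_one hs]
  rw [← integral_Ioc_eq_integral_Ioo, ← Ioc_union_Ioc_eq_Ioc hb hba,
    setIntegral_union (Ioc_disjoint_Ioc_of_le le_rfl) measurableSet_Ioc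
      (hint.mono_set (Ioc_subset_Ioc_right hba)) (hint.mono_set (Ioc_subset_Ioc_left hb)),
    hbelow, habove]
  ring

theorem integral_sign_sub_mul_rpow_add (hT : 0 < T) (hs : 0 < s) :
    (∫ t in Ioi 1, Real.sign (T - t) * t ^ (-s - 1)) +
        ∫ t in Ioo 0 1, Real.sign (T - t) * t ^ (s - 1) =
      2 * ((min T 1 ^ s - max T 1 ^ (-s)) / s) := by
  rw [setIntegral_congr_fun measurableSet_Ioi
      (g := fun t => Real.sign (max T 1 - t) * t ^ (-s - 1))
      fun t ht => by simp only [Real.sign_max_sub_of_lt T ht],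
    setIntegral_congr_fun measurableSet_Ioo
      (g := fun t => Real.sign (min T 1 - t) * t ^ (s - 1))
      fun t ht => by simp only [Real.sign_min_sub_of_gt T ht.2],
    integral_Ioi_sign_sub_mul_rpow hs one_pos (le_max_right T 1),
    integral_Ioo_zero_sign_sub_mul_rpow hs (le_min hT.le zero_le_one) (min_le_right T 1),
    Real.one_rpow, Real.one_rpow]
  ring

theorem tendsto_rpow_sub_rpow_neg_div {m M : ℝ} (hm : 0 < m) (hM : 0 < M) :
    Tendsto (fun s : ℝ => (m ^ s - M ^ (-s)) / s) (nhdsWithin 0 (Ioi 0))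
      (nhds (Real.log (m * M))) := by
  have hderiv : HasDerivAt (fun s : ℝ => m ^ s - M ^ (-s)) (Real.log m + Real.log M) 0 := by
    refine ((Real.hasStrictDerivAt_const_rpow hm 0).hasDerivAt.sub
      ((hasDerivAt_neg (0 : ℝ)).const_rpow hM)).congr_deriv ?_
    simp
  rw [Real.log_mul hm.ne' hM.ne']
  refine hderiv.tendsto_slope_zero_right.congr fun s => ?_
  simp [div_eq_inv_mul]

theorem integrable_and_tendsto_of_eq_mul_sign_sub (hT : 0 < T) (c : ℂ) {φ : ℝ → ℂ}
    (hφ : ∀ t, 0 < t → φ t = c * Real.sign (T - t)) :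
    (∀ s : ℝ, 0 < s →
      IntegrableOn (fun t : ℝ => φ t * ((t ^ (-s) : ℝ) : ℂ) / (t : ℂ)) (Ioi 1) ∧
      IntegrableOn (fun t : ℝ => φ t * ((t ^ s : ℝ) : ℂ) / (t : ℂ)) (Ioo 0 1)) ∧
    Tendsto (fun s : ℝ =>
        (∫ t in Ioi (1 : ℝ), φ t * ((t ^ (-s) : ℝ) : ℂ) / (t : ℂ)) +
        ∫ t in Ioo (0 : ℝ) 1, φ t * ((t ^ s : ℝ) : ℂ) / (t : ℂ))
      (nhdsWithin 0 (Ioi 0)) (nhds (c * ((2 * Real.log T : ℝ) : ℂ))) := by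
  have hIoi : ∀ s : ℝ, EqOn (fun t : ℝ => φ t * ((t ^ (-s) : ℝ) : ℂ) / (t : ℂ))
      (fun t => c * ((Real.sign (T - t) * t ^ (-s - 1) : ℝ) : ℂ)) (Ioi 1) := by
    intro s t ht
    have ht0 : 0 < t := one_pos.trans ht
    simp only [hφ t ht0, Real.rpow_sub_one ht0.ne']
    push_cast
    ring
  have hIoo : ∀ s : ℝ, EqOn (fun t : ℝ => φ t * ((t ^ s : ℝ) : ℂ) / (t : ℂ))
      (fun t => c * ((Real.sign (T - t) * t ^ (s - 1) : ℝ) : ℂ)) (Ioo 0 1) := by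
    intro s t ht
    simp only [hφ t ht.1, Real.rpow_sub_one ht.1.ne']
    push_cast
    ring
  refine ⟨fun s hs => ⟨?_, ?_⟩, ?_⟩
  · exact IntegrableOn.congr_fun
      (((integrableOn_Ioi_rpow_of_lt (by linarith) one_pos).sign_sub_mul T).ofReal.const_mul c)
      (hIoi s).symm measurableSet_Ioi
  · exact IntegrableOn.congr_fun
      ((((intervalIntegral.intervalIntegrable_rpow' (by linarith)).1.mono_set
        Ioo_subset_Ioc_self).sign_sub_mul T).ofReal.const_mul c) (hIoo s).symm measurableSet_Ioo
  have hlim := ((tendsto_rpow_sub_rpow_neg_div (lt_min hT one_pos)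
    (hT.trans_le (le_max_left T 1))).const_mul 2).ofReal.const_mul c
  rw [min_mul_max, mul_one] at hlim
  refine hlim.congr' ?_
  filter_upwards [self_mem_nhdsWithin] with s hs
  rw [setIntegral_congr_fun measurableSet_Ioi (hIoi s),
    setIntegral_congr_fun measurableSet_Ioo (hIoo s), integral_const_mul, integral_const_mul,
    integral_complex_ofReal, integral_complex_ofReal, ← mul_add, ← Complex.ofReal_add,
    integral_sign_sub_mul_rpow_add hT hs]

end

theorem iota_snd_sq_sub_fst_sq_div_two {N : ℕ} (hN : 0 < N) {t : ℝ} (ht : t ≠ 0) (x₁ x₂ : ℝ) :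
    ((iota N t x₁ x₂).2 ^ 2 - (iota N t x₁ x₂).1 ^ 2) / 2 = -(x₁ * x₂) / N := by
  have h2N : Real.sqrt (2 * N) ^ 2 = 2 * N := Real.sq_sqrt (by positivity)
  have hN' : (N : ℝ) ≠ 0 := by positivity
  simp only [iota, div_pow, ← sub_div, h2N]
  field_simp
  ring

theorem sign_iota_fst {N : ℕ} (hN : 0 < N) {t T x₁ x₂ : ℝ} (ht : 0 < t) (hT : 0 < T)
    (hTx : x₁ + T ^ 2 * x₂ = 0) :
    Real.sign (iota N t x₁ x₂).1 = Real.sign x₁ * Real.sign (T - t) := by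
  have hsqrt : 0 < Real.sqrt (2 * N) := by positivity
  have hfactor : (iota N t x₁ x₂).1 =
      x₁ * (T - t) * ((T + t) / (t * T ^ 2 * Real.sqrt (2 * N))) := by
    have hx₂ : x₂ = -x₁ / T ^ 2 := by field_simp; linarith
    simp only [iota, hx₂]
    field_simp
    ring
  rw [hfactor, Real.sign_mul, Real.sign_mul,
    Real.sign_of_pos (r := (T + t) / _) (by positivity), mul_one]

theorem phiPlus_of_sq_lt (τ : ℂ) {x y : ℝ} (h : x ^ 2 < y ^ 2) :
    phiPlus τ x y = eC ((((y ^ 2 - x ^ 2) / 2 : ℝ) : ℂ) * τ) * Real.sign x := by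
  simp [phiPlus, h]

theorem phiPlus_iota {N : ℕ} (hN : 0 < N) (τ : ℂ) {t T x₁ x₂ : ℝ} (ht : 0 < t) (hT : 0 < T)
    (hTx : x₁ + T ^ 2 * x₂ = 0) (hx : x₁ * x₂ < 0) :
    phiPlus τ (iota N t x₁ x₂).1 (iota N t x₁ x₂).2 =
      Real.sign x₁ * eC (((-(x₁ * x₂) / N : ℝ) : ℂ) * τ) * Real.sign (T - t) := by
  have hdiff := iota_snd_sq_sub_fst_sq_div_two hN ht.ne' x₁ x₂
  have hlt : (iota N t x₁ x₂).1 ^ 2 < (iota N t x₁ x₂).2 ^ 2 := by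
    have : 0 < -(x₁ * x₂) / N := div_pos (by linarith) (by positivity)
    linarith
  rw [phiPlus_of_sq_lt τ hlt, hdiff, sign_iota_fst hN ht hT hTx]
  push_cast
  ring

theorem stmt15_general (N : ℕ) (hN : 0 < N) (τ : ℂ) (x₁ x₂ : ℝ)
    (hx : x₁ * x₂ < 0) :
    (∀ s : ℝ, 0 < s →
      IntegrableOn (fun t : ℝ =>
        phiPlus τ (iota N t x₁ x₂).1 (iota N t x₁ x₂).2 * ((t ^ (-s) : ℝ) : ℂ) / (t : ℂ))
        (Set.Ioi 1) ∧
      IntegrableOn (fun t : ℝ =>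
        phiPlus τ (iota N t x₁ x₂).1 (iota N t x₁ x₂).2 * ((t ^ s : ℝ) : ℂ) / (t : ℂ))
        (Set.Ioo 0 1)) ∧
    Tendsto (fun s : ℝ =>
        (∫ t in Set.Ioi (1 : ℝ),
          phiPlus τ (iota N t x₁ x₂).1 (iota N t x₁ x₂).2 * ((t ^ (-s) : ℝ) : ℂ) / (t : ℂ)) +
        ∫ t in Set.Ioo (0 : ℝ) 1,
          phiPlus τ (iota N t x₁ x₂).1 (iota N t x₁ x₂).2 * ((t ^ s : ℝ) : ℂ) / (t : ℂ))
      (nhdsWithin 0 (Set.Ioi 0))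
      (nhds ((Real.sign x₁ : ℂ) * (Real.log |x₁ / x₂| : ℂ) *
        eC (((-(x₁ * x₂) / N : ℝ) : ℂ) * τ))) := by
  have hx₂ : x₂ ≠ 0 := by rintro rfl; simp at hx
  have hratio : x₁ / x₂ < 0 := by
    rw [← mul_div_mul_right x₁ x₂ hx₂]
    exact div_neg_of_neg_of_pos hx (mul_self_pos.2 hx₂)
  set T := Real.sqrt |x₁ / x₂|
  have hT : 0 < T := Real.sqrt_pos.2 (abs_pos.2 hratio.ne)
  have hTx : x₁ + T ^ 2 * x₂ = 0 := by
    rw [Real.sq_sqrt (abs_nonneg _), abs_of_neg hratio]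
    field_simp
    ring
  obtain ⟨hint, hlim⟩ := integrable_and_tendsto_of_eq_mul_sign_sub hT _
    fun t ht => phiPlus_iota hN τ ht hT hTx hx
  refine ⟨hint, ?_⟩
  convert hlim using 2
  rw [Real.log_sqrt (abs_nonneg _)]
  push_cast
  ring

/-- with `x₁x₂ < 0` and `n = -x₁x₂/N`, the regularized integral
`I⁺(s) = ∫_1^∞ φ⁺_τ(ι_t(x₁,x₂))·t^{-s} dt/t + ∫_0^1 φ⁺_τ(ι_t(x₁,x₂))·t^{s} dt/t`
converges absolutely for `s > 0` and tends to `sgn(x₁)·log|x₁/x₂|·e(nτ)` as `s → 0⁺`. -/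
theorem stmt15 (N : ℕ) (hN : 0 < N) (τ : ℂ) (hτ : 0 < τ.im) (x₁ x₂ : ℝ)
    (hx : x₁ * x₂ < 0) :
    (∀ s : ℝ, 0 < s →
      IntegrableOn (fun t : ℝ =>
        phiPlus τ (iota N t x₁ x₂).1 (iota N t x₁ x₂).2 * ((t ^ (-s) : ℝ) : ℂ) / (t : ℂ))
        (Set.Ioi 1) ∧
      IntegrableOn (fun t : ℝ =>
        phiPlus τ (iota N t x₁ x₂).1 (iota N t x₁ x₂).2 * ((t ^ s : ℝ) : ℂ) / (t : ℂ))
        (Set.Ioo 0 1)) ∧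
    Tendsto (fun s : ℝ =>
        (∫ t in Set.Ioi (1 : ℝ),
          phiPlus τ (iota N t x₁ x₂).1 (iota N t x₁ x₂).2 * ((t ^ (-s) : ℝ) : ℂ) / (t : ℂ)) +
        ∫ t in Set.Ioo (0 : ℝ) 1,
          phiPlus τ (iota N t x₁ x₂).1 (iota N t x₁ x₂).2 * ((t ^ s : ℝ) : ℂ) / (t : ℂ))
      (nhdsWithin 0 (Set.Ioi 0))
      (nhds ((Real.sign x₁ : ℂ) * (Real.log |x₁ / x₂| : ℂ) *
        eC (((-(x₁ * x₂) / N : ℝ) : ℂ) * τ))) :=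
  stmt15_general N hN τ x₁ x₂ hx

end
end
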